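/- For every n≥0, Dyck_n(d) = Mot_n(b,λ), where b=(b_0,b_1,...) and λ=(λ_0,λ_1,...) are the rational sequences with b_0=λ_0=1 and, for n≥1, b_n = 3 - 1/(F_{2n-1}·F_{2n-3}) and λ_n = 1 + 1/F_{2n-1}². -/

import Mathlib

/-- A step of a Motzkin path: up `(1,1)`, down `(1,-1)`, or horizontal `(1,0)`. -/
inductive MStep : Type
  | up : MStep
  | down : MStep
  | flat : MStep
  deriving DecidableEq

instance : Fintype MStep :=
  ⟨{MStep.up, MStep.down, MStep.flat}, by intro x; cases x <;> first | decide | simp⟩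

/-- The vertical displacement of a Motzkin step. -/
def MStep.val : MStep → ℤ
  | .up => 1
  | .down => -1
  | .flat => 0

/-- The height of the path after its first `k` steps. -/
def mHeight (l : List MStep) (k : ℕ) : ℤ := ((l.take k).map MStep.val).sum

/-- A list of steps is a Motzkin path if it never goes below the x-axis and ends at height 0. -/
def IsMotzkin (l : List MStep) : Prop :=
  (∀ k : ℕ, 0 ≤ mHeight l k) ∧ mHeight l l.length = 0

/-- The weight of a Motzkin path w.r.t. `(b, lam)`: a factor `b i` for every horizontal step
of height `i` and a factor `lam i` for every down step of height `i` (the height of a step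
being the `y`-coordinate of its ending point). -/
def mWeight (b lam : ℕ → ℚ) (l : List MStep) : ℚ :=
  ∏ i ∈ Finset.range l.length,
    match l.getD i MStep.up with
    | .up => 1
    | .flat => b (mHeight l (i + 1)).toNat
    | .down => lam (mHeight l (i + 1)).toNat

open Classical in
/-- `Mot_n(b,lam)`: the sum of the weights of all Motzkin paths of length `n`. -/
noncomputable def motSum (n : ℕ) (b lam : ℕ → ℚ) : ℚ :=
  ∑ f : Fin n → MStep,
    if IsMotzkin (List.ofFn f) then mWeight b lam (List.ofFn f) else 0

/-- A step of a Dyck path: up `(1,1)` or down `(1,-1)`. -/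
inductive DStep : Type
  | up : DStep
  | down : DStep
  deriving DecidableEq

instance : Fintype DStep :=
  ⟨{DStep.up, DStep.down}, by intro x; cases x <;> first | decide | simp⟩

/-- The vertical displacement of a Dyck step. -/
def DStep.val : DStep → ℤ
  | .up => 1
  | .down => -1

/-- The height of the path after its first `k` steps. -/
def dHeight (l : List DStep) (k : ℕ) : ℤ := ((l.take k).map DStep.val).sum

/-- A list of steps is a Dyck path if it never goes below the x-axis and ends at height 0. -/
def IsDyck (l : List DStep) : Prop :=
  (∀ k : ℕ, 0 ≤ dHeight l k) ∧ dHeight l l.length = 0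

/-- The weight of a Dyck path w.r.t. `c`: a factor `c i` for every down step of height `i`
(the height of a step being the `y`-coordinate of its ending point). -/
def dWeight (c : ℕ → ℚ) (l : List DStep) : ℚ :=
  ∏ i ∈ Finset.range l.length,
    match l.getD i DStep.up with
    | .up => 1
    | .down => c (dHeight l (i + 1)).toNat

open Classical in
/-- `Dyck_n(c)`: the sum of the weights of all Dyck paths of length `2n`. -/
noncomputable def dyckSum (n : ℕ) (c : ℕ → ℚ) : ℚ :=
  ∑ f : Fin (2 * n) → DStep,
    if IsDyck (List.ofFn f) then dWeight c (List.ofFn f) else 0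

/-- Fibonacci numbers extended to all integer indices:
`fibZ 0 = 0`, `fibZ 1 = 1`, `fibZ m = fibZ (m-1) + fibZ (m-2)` (so `fibZ (-1) = 1`). -/
def fibZ : ℤ → ℤ
  | Int.ofNat n => Nat.fib n
  | Int.negSucc n => (-1) ^ n * Nat.fib (n + 1)


/-!
Reading a Dyck path two steps at a time (`UU ↦ U`, `DD ↦ D`, `UD, DU ↦ H`) turns a Dyck path
of length `2n` from an even height `2h` into a Motzkin path of length `n` from height `h`. On the
first-step recursions for the weighted path counts this is the contraction
`b₀ = d₀`, `b_{h+1} = d_{2h+2} + d_{2h+1}`, `λ_h = d_{2h+1} d_{2h}`.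
For the given `d` these become Fibonacci identities in `u_j = F_{2j-1}`, which satisfies
`u_{j+2} = 3 u_{j+1} - u_j`, so that `u_j² + u_{j+1}² - 3 u_j u_{j+1}` is constant, equal to `-1`.
-/

namespace LatticePath

variable {S : Type*} (val : S → ℤ) (wt : S → ℤ → ℚ) (s₀ : S)

def height (l : List S) (k : ℕ) : ℤ := ((l.take k).map val).sum

def IsPathFrom (h : ℤ) (l : List S) : Prop :=
  (∀ k, 0 ≤ h + height val l k) ∧ h + height val l l.length = 0

-- `s₀` is only the default value of `List.getD`; the indices read are always in range.
def weight (h : ℤ) (l : List S) : ℚ :=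
  ∏ i ∈ Finset.range l.length, wt (l.getD i s₀) (h + height val l (i + 1))

open Classical in
noncomputable def pathSum [Fintype S] (n : ℕ) (h : ℤ) : ℚ :=
  ∑ f : Fin n → S, if IsPathFrom val h (List.ofFn f) then weight val wt s₀ h (List.ofFn f) else 0

variable {val wt s₀}

@[simp] lemma height_zero (l : List S) : height val l 0 = 0 := by simp [height]

@[simp] lemma height_nil (k : ℕ) : height val [] k = 0 := by simp [height]

lemma height_cons_add_one (s : S) (t : List S) (k : ℕ) :
    height val (s :: t) (k + 1) = val s + height val t k := by
  simp [height]

lemma IsPathFrom.nonneg {h : ℤ} {l : List S} (hl : IsPathFrom val h l) : 0 ≤ h := by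
  simpa using hl.1 0

lemma isPathFrom_nil {h : ℤ} : IsPathFrom val h [] ↔ h = 0 := by
  simp only [IsPathFrom, height_nil, add_zero, List.length_nil]
  exact ⟨And.right, fun h0 => ⟨fun _ => h0.ge, h0⟩⟩

lemma isPathFrom_cons {h : ℤ} (hh : 0 ≤ h) (s : S) (t : List S) :
    IsPathFrom val h (s :: t) ↔ IsPathFrom val (h + val s) t := by
  rw [IsPathFrom, IsPathFrom, ← Nat.and_forall_add_one]
  simp only [height_zero, add_zero, List.length_cons, height_cons_add_one, add_assoc, hh, true_and]

lemma weight_cons (h : ℤ) (s : S) (t : List S) :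
    weight val wt s₀ h (s :: t) = wt s (h + val s) * weight val wt s₀ (h + val s) t := by
  simp only [weight, List.length_cons, Finset.prod_range_succ', List.getD_cons_succ,
    List.getD_cons_zero, height_cons_add_one, height_zero, add_zero, add_assoc]
  ring

variable [Fintype S]

lemma pathSum_zero (h : ℤ) : pathSum val wt s₀ 0 h = if h = 0 then 1 else 0 := by
  simp [pathSum, isPathFrom_nil, weight]

lemma pathSum_of_neg (n : ℕ) {h : ℤ} (hh : h < 0) : pathSum val wt s₀ n h = 0 :=
  Finset.sum_eq_zero fun _ _ => if_neg fun hf => hh.not_ge hf.nonneg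

lemma pathSum_succ (n : ℕ) {h : ℤ} (hh : 0 ≤ h) :
    pathSum val wt s₀ (n + 1) h = ∑ s, wt s (h + val s) * pathSum val wt s₀ n (h + val s) := by
  rw [pathSum, ← (Fin.consEquiv fun _ => S).sum_comp, Fintype.sum_prod_type]
  refine Finset.sum_congr rfl fun s _ => ?_
  rw [pathSum, Finset.mul_sum]
  refine Finset.sum_congr rfl fun f _ => ?_
  rw [Fin.consEquiv, Equiv.coe_fn_mk, List.ofFn_cons, isPathFrom_cons hh, weight_cons, mul_ite,
    mul_zero]

end LatticePath

open LatticePath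

lemma DStep.sum_univ (f : DStep → ℚ) : ∑ s, f s = f .up + f .down := by
  rw [show (Finset.univ : Finset DStep) = {.up, .down} from rfl]
  simp

lemma MStep.sum_univ (f : MStep → ℚ) : ∑ s, f s = f .up + f .down + f .flat := by
  rw [show (Finset.univ : Finset MStep) = {.up, .down, .flat} from rfl]
  simp [add_assoc]

def dStepWeight (c : ℕ → ℚ) : DStep → ℤ → ℚ
  | .up, _ => 1
  | .down, h => c h.toNat

def mStepWeight (b lam : ℕ → ℚ) : MStep → ℤ → ℚ
  | .up, _ => 1
  | .down, h => lam h.toNat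
  | .flat, h => b h.toNat

lemma isDyck_iff_isPathFrom (l : List DStep) : IsDyck l ↔ IsPathFrom DStep.val 0 l := by
  simp only [IsPathFrom, zero_add]
  rfl

lemma isMotzkin_iff_isPathFrom (l : List MStep) : IsMotzkin l ↔ IsPathFrom MStep.val 0 l := by
  simp only [IsPathFrom, zero_add]
  rfl

lemma dWeight_eq_weight (c : ℕ → ℚ) (l : List DStep) :
    dWeight c l = weight DStep.val (dStepWeight c) .up 0 l := by
  refine Finset.prod_congr rfl fun i _ => ?_
  cases l.getD i .up <;> simp [dStepWeight, height, dHeight]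

lemma mWeight_eq_weight (b lam : ℕ → ℚ) (l : List MStep) :
    mWeight b lam l = weight MStep.val (mStepWeight b lam) .up 0 l := by
  refine Finset.prod_congr rfl fun i _ => ?_
  cases l.getD i .up <;> simp [mStepWeight, height, mHeight]

lemma dyckSum_eq_pathSum (n : ℕ) (c : ℕ → ℚ) :
    dyckSum n c = pathSum DStep.val (dStepWeight c) .up (2 * n) 0 :=
  Finset.sum_congr rfl fun f _ => by rw [isDyck_iff_isPathFrom, dWeight_eq_weight]

lemma motSum_eq_pathSum (n : ℕ) (b lam : ℕ → ℚ) :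
    motSum n b lam = pathSum MStep.val (mStepWeight b lam) .up n 0 :=
  Finset.sum_congr rfl fun f _ => by rw [isMotzkin_iff_isPathFrom, mWeight_eq_weight]

def dyckWalk (c : ℕ → ℚ) : ℕ → ℕ → ℚ
  | 0, h => if h = 0 then 1 else 0
  | n + 1, 0 => dyckWalk c n 1
  | n + 1, h + 1 => dyckWalk c n (h + 2) + c h * dyckWalk c n h

def motzkinWalk (b lam : ℕ → ℚ) : ℕ → ℕ → ℚ
  | 0, h => if h = 0 then 1 else 0
  | n + 1, 0 => motzkinWalk b lam n 1 + b 0 * motzkinWalk b lam n 0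
  | n + 1, h + 1 => motzkinWalk b lam n (h + 2) + b (h + 1) * motzkinWalk b lam n (h + 1)
      + lam h * motzkinWalk b lam n h

lemma pathSum_dStepWeight_eq_dyckWalk (c : ℕ → ℚ) (n h : ℕ) :
    pathSum DStep.val (dStepWeight c) .up n h = dyckWalk c n h := by
  induction n generalizing h with
  | zero => simp [pathSum_zero, dyckWalk]
  | succ n ih =>
    rw [pathSum_succ n (Int.natCast_nonneg h), DStep.sum_univ]
    cases h with
    | zero => simp [DStep.val, dStepWeight, dyckWalk, pathSum_of_neg, ← ih]
    | succ h => simp [DStep.val, dStepWeight, dyckWalk, ← ih, add_assoc, one_add_one_eq_two]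

lemma pathSum_mStepWeight_eq_motzkinWalk (b lam : ℕ → ℚ) (n h : ℕ) :
    pathSum MStep.val (mStepWeight b lam) .up n h = motzkinWalk b lam n h := by
  induction n generalizing h with
  | zero => simp [pathSum_zero, motzkinWalk]
  | succ n ih =>
    rw [pathSum_succ n (Int.natCast_nonneg h), MStep.sum_univ]
    cases h with
    | zero => simp [MStep.val, mStepWeight, motzkinWalk, pathSum_of_neg, ← ih]
    | succ h =>
      simp [MStep.val, mStepWeight, motzkinWalk, ← ih, add_assoc, one_add_one_eq_two]
      ring

theorem dyckWalk_two_mul_eq_motzkinWalk {c b lam : ℕ → ℚ} (hb0 : b 0 = c 0)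
    (hb : ∀ h, b (h + 1) = c (2 * h + 2) + c (2 * h + 1))
    (hlam : ∀ h, lam h = c (2 * h + 1) * c (2 * h)) (n h : ℕ) :
    dyckWalk c (2 * n) (2 * h) = motzkinWalk b lam n h := by
  induction n generalizing h with
  | zero => simp [dyckWalk, motzkinWalk]
  | succ n ih =>
    rw [show 2 * (n + 1) = 2 * n + 1 + 1 by ring]
    cases h with
    | zero => simp [dyckWalk, motzkinWalk, ← ih, hb0]
    | succ h =>
      rw [show 2 * (h + 1) = 2 * h + 1 + 1 by ring]
      simp only [dyckWalk, motzkinWalk, hb, hlam, ← ih]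
      rw [show 2 * (h + 2) = 2 * h + 2 + 2 by ring, show 2 * (h + 1) = 2 * h + 2 by ring]
      ring

theorem dyckSum_eq_motSum_of_contraction {c b lam : ℕ → ℚ} (hb0 : b 0 = c 0)
    (hb : ∀ h, b (h + 1) = c (2 * h + 2) + c (2 * h + 1))
    (hlam : ∀ h, lam h = c (2 * h + 1) * c (2 * h)) (n : ℕ) :
    dyckSum n c = motSum n b lam :=
  calc dyckSum n c = dyckWalk c (2 * n) (2 * 0) := by
        rw [dyckSum_eq_pathSum, ← pathSum_dStepWeight_eq_dyckWalk]; rfl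
    _ = motzkinWalk b lam n 0 := dyckWalk_two_mul_eq_motzkinWalk hb0 hb hlam n 0
    _ = motSum n b lam := by
        rw [motSum_eq_pathSum, ← pathSum_mStepWeight_eq_motzkinWalk]; rfl

def oddFib (j : ℕ) : ℤ := fibZ (2 * j - 1)

lemma oddFib_zero : oddFib 0 = 1 := by decide

lemma oddFib_succ (j : ℕ) : oddFib (j + 1) = Nat.fib (2 * j + 1) := by
  rw [oddFib, show 2 * ((j + 1 : ℕ) : ℤ) - 1 = ((2 * j + 1 : ℕ) : ℤ) by push_cast; ring]
  rfl

lemma fibZ_two_mul_sub_three (j : ℕ) : fibZ (2 * ((j + 1 : ℕ) : ℤ) - 3) = oddFib j := by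
  rw [oddFib, show 2 * ((j + 1 : ℕ) : ℤ) - 3 = 2 * (j : ℤ) - 1 by push_cast; ring]

lemma oddFib_pos (j : ℕ) : 0 < oddFib j := by
  cases j with
  | zero => simp [oddFib_zero]
  | succ j => simp [oddFib_succ, Nat.fib_pos]

lemma oddFib_cast_ne_zero (j : ℕ) : (oddFib j : ℚ) ≠ 0 := by exact_mod_cast (oddFib_pos j).ne'

lemma oddFib_add_two (j : ℕ) : oddFib (j + 2) = 3 * oddFib (j + 1) - oddFib j := by
  cases j with
  | zero => decide
  | succ j =>
    simp only [oddFib_succ, show 2 * (j + 1 + 1) + 1 = 2 * j + 1 + 2 + 2 by ring,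
      show 2 * (j + 1) + 1 = 2 * j + 1 + 2 by ring, Nat.fib_add_two]
    push_cast
    ring

lemma oddFib_sq_add_sq (j : ℕ) :
    oddFib j ^ 2 + oddFib (j + 1) ^ 2 = 3 * oddFib j * oddFib (j + 1) - 1 := by
  induction j with
  | zero => decide
  | succ j ih => rw [oddFib_add_two]; linear_combination ih

lemma oddFib_mul_oddFib_add_two (j : ℕ) :
    oddFib j * oddFib (j + 2) = oddFib (j + 1) ^ 2 + 1 := by
  rw [oddFib_add_two]; linear_combination -oddFib_sq_add_sq j

lemma oddFib_div_add_div (j : ℕ) :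
    (oddFib j / oddFib (j + 1) + oddFib (j + 1) / oddFib j : ℚ)
      = 3 - 1 / (oddFib (j + 1) * oddFib j) := by
  have hj := oddFib_cast_ne_zero j
  have hj1 := oddFib_cast_ne_zero (j + 1)
  have key : (oddFib j ^ 2 + oddFib (j + 1) ^ 2 : ℚ) = 3 * oddFib j * oddFib (j + 1) - 1 := by
    exact_mod_cast oddFib_sq_add_sq j
  field_simp
  linear_combination key

lemma oddFib_div_mul_div (j : ℕ) :
    (oddFib (j + 2) / oddFib (j + 1) * (oddFib j / oddFib (j + 1)) : ℚ)
      = 1 + 1 / oddFib (j + 1) ^ 2 := by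
  have hj1 := oddFib_cast_ne_zero (j + 1)
  have key : (oddFib j * oddFib (j + 2) : ℚ) = oddFib (j + 1) ^ 2 + 1 := by
    exact_mod_cast oddFib_mul_oddFib_add_two j
  field_simp
  linear_combination key

/-- `Dyck_n(d) = Mot_n(b, λ)` for all `n ≥ 0`. -/
theorem dyck_d_eq_motzkin_b_lambda
(d : ℕ → ℚ) (hd0 : d 0 = 1)
    (hdodd : ∀ m : ℕ, 1 ≤ m →
      d (2 * m - 1) = (fibZ (2 * (m : ℤ) - 1) : ℚ) / (fibZ (2 * (m : ℤ) - 3) : ℚ))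
    (hdeven : ∀ m : ℕ, 1 ≤ m →
      d (2 * m) = (fibZ (2 * (m : ℤ) - 3) : ℚ) / (fibZ (2 * (m : ℤ) - 1) : ℚ))
(b lam : ℕ → ℚ) (hb0 : b 0 = 1) (hlam0 : lam 0 = 1)
    (hb : ∀ m : ℕ, 1 ≤ m →
      b m = 3 - 1 / ((fibZ (2 * (m : ℤ) - 1) : ℚ) * (fibZ (2 * (m : ℤ) - 3) : ℚ)))
    (hlam : ∀ m : ℕ, 1 ≤ m → lam m = 1 + 1 / (fibZ (2 * (m : ℤ) - 1) : ℚ) ^ 2)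
    (n : ℕ) :
    dyckSum n d = motSum n b lam := by
  have hd_odd (j : ℕ) : d (2 * j + 1) = oddFib (j + 1) / oddFib j := by
    have h := hdodd (j + 1) (by omega)
    rwa [show 2 * (j + 1) - 1 = 2 * j + 1 by omega, fibZ_two_mul_sub_three] at h
  have hd_even (j : ℕ) : d (2 * j + 2) = oddFib j / oddFib (j + 1) := by
    have h := hdeven (j + 1) (by omega)
    rwa [show 2 * (j + 1) = 2 * j + 2 by ring, fibZ_two_mul_sub_three] at h
  refine dyckSum_eq_motSum_of_contraction (hb0.trans hd0.symm) (fun h => ?_) (fun h => ?_) n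
  · rw [hd_even, hd_odd, hb (h + 1) (by omega), fibZ_two_mul_sub_three]
    exact (oddFib_div_add_div h).symm
  · cases h with
    | zero => simp [hd_odd 0, hd0, hlam0, oddFib_zero, oddFib_succ]
    | succ j =>
      rw [hd_odd, show 2 * (j + 1) = 2 * j + 2 by ring, hd_even, hlam (j + 1) (by omega)]
      exact (oddFib_div_mul_div j).symm
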